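/- arXiv:2210.05573 — 2 statements merged into one kernel-verified Lean document; each statement's English description precedes it below -/
import Mathlib

section
/- For any ρ, σ, τ ∈ ℤ^d, Σ_{ℓ ∈ ℤ^d} (D_ρ D_σ D_τ δ₀)(ℓ) ⊗ ℓ^{⊗3} = −6·(ρ ⊙ σ ⊙ τ), where ρ ⊙ σ ⊙ τ = (1/6)Σ_{permutations} is the symmetrized triple tensor product and ℓ^{⊗3} = ℓ ⊗ ℓ ⊗ ℓ. -/
/-!
Summation by parts moves each difference `D_ρ` off `δ₀` onto the test function, where it becomes
the backward difference `g ↦ (ℓ ↦ g (ℓ - ρ) - g ℓ)`; pairing with `δ₀` then evaluates at `0`.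
The third backward difference of the cubic `ℓ ↦ ℓ^{⊗3}` in directions `ρ, σ, τ` is the constant
`-∑_{perm} ρ ⊗ σ ⊗ τ`.
-/

/-- Kronecker delta at the origin on `ℤ^d`. -/
def kdelta {d : ℕ} (ℓ : Fin d → ℤ) : ℝ := if ℓ = 0 then 1 else 0

/-- Finite-difference operator on scalar lattice functions. -/
def DopS {d : ℕ} (ρ : Fin d → ℤ) (f : (Fin d → ℤ) → ℝ) : (Fin d → ℤ) → ℝ :=
  fun ℓ => f (ℓ + ρ) - f ℓ

/-- Cast a lattice point to a real vector. -/
def toR {d : ℕ} (ℓ : Fin d → ℤ) : Fin d → ℝ := fun j => (ℓ j : ℝ)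

/-- Third-order elementary tensor `a ⊗ b ⊗ c` in coordinates. -/
def tens3 {d : ℕ} (a b c : Fin d → ℝ) : Fin d → Fin d → Fin d → ℝ :=
  fun i j k => a i * b j * c k

/-- Symmetrized triple tensor product: the average over all six permutations. -/
noncomputable def symTens3 {d : ℕ} (a b c : Fin d → ℝ) : Fin d → Fin d → Fin d → ℝ :=
  ((1 : ℝ) / 6) • (tens3 a b c + tens3 a c b + tens3 b a c + tens3 b c a +
    tens3 c a b + tens3 c b a)

theorem finsum_sub_smul_eq_finsum_smul_sub {G R M : Type*} [AddCommGroup G] [Ring R]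
    [AddCommGroup M] [Module R M] {f : G → R} (hf : f.HasFiniteSupport) (ρ : G) (g : G → M) :
    ∑ᶠ x, (f (x + ρ) - f x) • g x = ∑ᶠ x, f x • (g (x - ρ) - g x) := by
  have hshift : ∑ᶠ x, f (x + ρ) • g x = ∑ᶠ x, f x • g (x - ρ) := by
    simpa using finsum_comp_equiv (Equiv.addRight ρ) (f := fun x => f x • g (x - ρ))
  have hshift_fin : (fun x => f (x + ρ) • g x).HasFiniteSupport :=
    (hf.comp_of_injective (add_left_injective ρ)).fun_smul_left g
  simp only [sub_smul, smul_sub]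
  rw [finsum_sub_distrib hshift_fin (hf.fun_smul_left g), finsum_sub_distrib
    (hf.fun_smul_left _) (hf.fun_smul_left g), hshift]

section Lattice

variable {d : ℕ}

theorem kdelta_hasFiniteSupport : (kdelta (d := d)).HasFiniteSupport :=
  (Set.finite_singleton 0).subset fun ℓ hℓ => by
    by_contra h
    exact hℓ (if_neg h)

theorem DopS_hasFiniteSupport (ρ : Fin d → ℤ) {f : (Fin d → ℤ) → ℝ} (hf : f.HasFiniteSupport) :
    (DopS ρ f).HasFiniteSupport :=
  (hf.comp_of_injective (add_left_injective ρ)).sub hf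

theorem finsum_DopS_smul {M : Type*} [AddCommGroup M] [Module ℝ M] (ρ : Fin d → ℤ)
    {f : (Fin d → ℤ) → ℝ} (hf : f.HasFiniteSupport) (g : (Fin d → ℤ) → M) :
    ∑ᶠ ℓ, DopS ρ f ℓ • g ℓ = ∑ᶠ ℓ, f ℓ • (g (ℓ - ρ) - g ℓ) :=
  finsum_sub_smul_eq_finsum_smul_sub hf ρ g

theorem finsum_kdelta_smul {M : Type*} [AddCommGroup M] [Module ℝ M] (g : (Fin d → ℤ) → M) :
    ∑ᶠ ℓ, kdelta ℓ • g ℓ = g 0 := by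
  rw [finsum_eq_single _ 0 fun ℓ hℓ => by simp [kdelta, hℓ]]
  simp [kdelta]

end Lattice

/-- Third-moment identity: `Σ_ℓ (D_ρ D_σ D_τ δ₀)(ℓ) ⊗ ℓ^{⊗3} = −6 (ρ ⊙ σ ⊙ τ)`. -/
theorem stmt13 {d : ℕ} (ρ σ τ : Fin d → ℤ) :
    (∑ᶠ ℓ : Fin d → ℤ,
        (DopS ρ (DopS σ (DopS τ kdelta))) ℓ • tens3 (toR ℓ) (toR ℓ) (toR ℓ)) =
      (-6 : ℝ) • symTens3 (toR ρ) (toR σ) (toR τ) := by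
  have hτ := DopS_hasFiniteSupport τ kdelta_hasFiniteSupport
  rw [finsum_DopS_smul ρ (DopS_hasFiniteSupport σ hτ), finsum_DopS_smul σ hτ,
    finsum_DopS_smul τ kdelta_hasFiniteSupport, finsum_kdelta_smul]
  ext i j k
  simp only [tens3, toR, symTens3, Pi.sub_apply, Pi.smul_apply, Pi.add_apply, Pi.neg_apply,
    Pi.zero_apply, smul_eq_mul, zero_sub, Int.cast_neg, Int.cast_sub, Int.cast_zero]
  ring
end

section
/- Let H be a Hilbert space, E ∈ C²(H) with δ²E Lipschitz, and suppose ū ∈ H satisfies δE(ū) = 0 and the strong stability ⟨δ²E(ū)v, v⟩ ≥ c₀‖v‖² for all v ∈ H. Let W ⊂ H be a closed subspace and suppose there exists û ∈ H with ‖ū − û‖ ≤ ε where ε is sufficiently small (depending on c₀ and the Lipschitz constant of δ²E). Then there exists ū_W with ū_W − û ∈ W, δE(ū_W)[v] = 0 for all v ∈ W, and ‖ū − ū_W‖ ≤ C·dist(ū − û, W) + Cε for a constant C depending only on c₀ and the Lipschitz constants of δE and δ²E. -/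
open scoped RealInnerProductSpace

lemma mono_aux {H : Type*} [NormedAddCommGroup H] [InnerProductSpace ℝ H]
    (g : H → H) (Hess : H → H →L[ℝ] H)
    (hgH : ∀ x, HasFDerivAt g (Hess x) x) (μ : ℝ) (x y : H)
    (hseg : ∀ t ∈ Set.Icc (0:ℝ) 1,
      μ * ‖x - y‖ ^ 2 ≤ ⟪Hess (y + t • (x - y)) (x - y), x - y⟫) :
    μ * ‖x - y‖ ^ 2 ≤ ⟪g x - g y, x - y⟫ := by
  set d := x - y with hd
  set φ : ℝ → ℝ := fun t => ⟪g (y + t • d), d⟫ - t * (μ * ‖d‖ ^ 2) with hφ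
  have key : ∀ t : ℝ, HasDerivAt φ (⟪Hess (y + t • d) d, d⟫ - μ * ‖d‖ ^ 2) t := by
    intro t
    have hc : HasDerivAt (fun t : ℝ => y + t • d) d t := by
      simpa using ((hasDerivAt_id t).smul_const d).const_add y
    have h1 : HasDerivAt (fun t : ℝ => g (y + t • d)) (Hess (y + t • d) d) t :=
      HasFDerivAt.comp_hasDerivAt t (hgH _) hc
    have h2 : HasDerivAt (fun t : ℝ => ⟪g (y + t • d), d⟫) ⟪Hess (y + t • d) d, d⟫ t := by
      simpa [real_inner_comm] using h1.inner ℝ (hasDerivAt_const t d)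
    have h3 := h2.sub ((hasDerivAt_id t).mul_const (μ * ‖d‖ ^ 2))
    simp only [id_eq, one_mul] at h3
    exact h3
  have hdiff : Differentiable ℝ φ := fun t => (key t).differentiableAt
  have mono : MonotoneOn φ (Set.Icc (0:ℝ) 1) := by
    apply monotoneOn_of_deriv_nonneg (convex_Icc 0 1) hdiff.continuous.continuousOn
      hdiff.differentiableOn
    intro t ht
    rw [interior_Icc] at ht
    rw [(key t).deriv]
    have := hseg t ⟨ht.1.le, ht.2.le⟩
    linarith
  have h01 : φ 0 ≤ φ 1 :=
    mono ⟨le_refl _, zero_le_one⟩ ⟨zero_le_one, le_refl _⟩ zero_le_one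
  have e0 : φ 0 = ⟪g y, d⟫ := by simp [hφ]
  have e1 : φ 1 = ⟪g x, d⟫ - μ * ‖d‖ ^ 2 := by
    simp [hφ, hd]
  rw [e0, e1] at h01
  rw [inner_sub_left]
  linarith

set_option maxHeartbeats 1000000 in
/-- Abstract Galerkin quasi-optimality: a strongly stable critical point `ū` of a smooth
energy `E` (with gradient `g` and Lipschitz Hessian `Hess`) is approximated by critical
points of `E` restricted to affine subspaces `û + W`, with error controlled by the
best-approximation error `dist(ū − û, W)` plus `ε`, provided `‖ū − û‖ ≤ ε` is small
enough (depending on `c₀` and the Lipschitz constants). -/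
theorem stmt17 {H : Type*} [NormedAddCommGroup H] [InnerProductSpace ℝ H]
    [CompleteSpace H] (c₀ Lg LH : ℝ) (hc₀ : 0 < c₀) (hLg : 0 < Lg) (hLH : 0 < LH) :
    ∃ ε₀ : ℝ, 0 < ε₀ ∧ ∃ C : ℝ, 0 < C ∧
      ∀ (E : H → ℝ) (g : H → H) (Hess : H → H →L[ℝ] H) (ubar uhat : H)
        (W : Submodule ℝ H), IsClosed (W : Set H) →
        (∀ x, HasGradientAt E (g x) x) →
        (∀ x, HasFDerivAt g (Hess x) x) →
        LipschitzWith Lg.toNNReal g →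
        LipschitzWith LH.toNNReal Hess →
        g ubar = 0 →
        (∀ v : H, c₀ * ‖v‖ ^ 2 ≤ ⟪(Hess ubar) v, v⟫) →
        ∀ ε : ℝ, 0 < ε → ε ≤ ε₀ → ‖ubar - uhat‖ ≤ ε →
        ∃ uW : H, uW - uhat ∈ W ∧ (∀ v ∈ W, ⟪g uW, v⟫ = 0) ∧
          ‖ubar - uW‖ ≤ C * Metric.infDist (ubar - uhat) (W : Set H) + C * ε := by
  -- constants
  set μ : ℝ := min (c₀ / 2) (Lg / 2) with hμdef
  have hμ : 0 < μ := lt_min (by linarith) (by linarith)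
  have hμc : μ ≤ c₀ / 2 := min_le_left _ _
  have hμL : μ ≤ Lg / 2 := min_le_right _ _
  set q : ℝ := μ / Lg with hqdef
  have hq0 : 0 < q := div_pos hμ hLg
  have hq1 : q ≤ 1 / 2 := by
    rw [hqdef, div_le_div_iff₀ hLg (by norm_num)]
    linarith
  set k : ℝ := Real.sqrt (1 - q ^ 2) with hkdef
  have hq2 : (0:ℝ) ≤ 1 - q ^ 2 := by nlinarith [hq0, hq1]
  have hk0 : 0 ≤ k := Real.sqrt_nonneg _
  have hksq : k ^ 2 = 1 - q ^ 2 := Real.sq_sqrt hq2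
  have hk_le : k ≤ 1 - q ^ 2 / 2 := by
    have h1 : (1 - q ^ 2) ≤ (1 - q ^ 2 / 2) ^ 2 := by nlinarith [sq_nonneg (q ^ 2)]
    have h2 : (0:ℝ) ≤ 1 - q ^ 2 / 2 := by nlinarith [hq0, hq1]
    calc k ≤ Real.sqrt ((1 - q ^ 2 / 2) ^ 2) := Real.sqrt_le_sqrt h1
      _ = 1 - q ^ 2 / 2 := Real.sqrt_sq h2
  have hk1 : k < 1 := lt_of_le_of_lt hk_le (by nlinarith [pow_pos hq0 2])
  have h1k : q ^ 2 / 2 ≤ 1 - k := by linarith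
  have h1k0 : 0 < 1 - k := lt_of_lt_of_le (by positivity) h1k
  refine ⟨(c₀ / (2 * LH)) / (2 / q + 1), by positivity, 1 + 2 / q, by positivity, ?_⟩
  intro E g Hess ubar uhat W hWcl hgrad hgH hLipg hLipH hgubar hstab ε hε hεε₀ hbar
  haveI : CompleteSpace W := hWcl.completeSpace_coe
  set v : H := ubar - uhat with hvdef
  set w₀ : H := (W.orthogonalProjectionOnto v : H) with hw₀def
  have hw₀W : w₀ ∈ W := SetLike.coe_mem _
  set D : ℝ := Metric.infDist v (W : Set H) with hDdef
  have hD0 : 0 ≤ D := Metric.infDist_nonneg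
  set dd : ℝ := ‖v - w₀‖ with hdddef
  have hproj : ∀ w ∈ W, ⟪v - w₀, w⟫ = 0 := fun w hw => Submodule.starProjection_inner_eq_zero v w hw
  have hdd_le : ∀ w ∈ W, dd ≤ ‖v - w‖ := by
    intro w hw
    have hsplit : v - w = (v - w₀) + (w₀ - w) := by abel
    have hpy : ‖v - w‖ ^ 2 = dd ^ 2 + ‖w₀ - w‖ ^ 2 := by
      rw [hsplit, norm_add_sq_real, hproj _ (sub_mem hw₀W hw)]
      ring
    have h0 : dd ^ 2 ≤ ‖v - w‖ ^ 2 := by nlinarith [sq_nonneg ‖w₀ - w‖]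
    have h1 := Real.sqrt_le_sqrt h0
    rwa [Real.sqrt_sq (norm_nonneg (v - w₀)), Real.sqrt_sq (norm_nonneg (v - w))] at h1
  have hdD : dd ≤ D := by
    haveI : Nonempty (W : Set H) := ⟨⟨0, W.zero_mem⟩⟩
    rw [hDdef, Metric.infDist_eq_iInf]
    exact le_ciInf fun w => by rw [dist_eq_norm]; exact hdd_le w w.2
  have hDε : D ≤ ε := by
    have h0 : Metric.infDist v (W : Set H) ≤ dist v 0 :=
      Metric.infDist_le_dist_of_mem (by exact W.zero_mem)
    rw [dist_zero_right] at h0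
    exact h0.trans hbar
  have hddε : dd ≤ ε := hdD.trans hDε
  set t : ℝ := q / Lg with htdef
  have ht0 : 0 < t := div_pos hq0 hLg
  have htLg : t * Lg = q := by rw [htdef]; exact div_mul_cancel₀ _ hLg.ne'
  have hμq : μ = q * Lg := by rw [hqdef, div_mul_cancel₀ _ hLg.ne']
  set r : ℝ := q * ε / (1 - k) with hrdef
  have hr0 : 0 < r := by positivity
  have hqεr : q * ε = (1 - k) * r := by
    rw [hrdef]; field_simp [h1k0.ne']
  have hr_le : r ≤ 2 / q * ε := by
    rw [hrdef]
    have h2 : q * ε / (1 - k) ≤ q * ε / (q ^ 2 / 2) :=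
      div_le_div_of_nonneg_left (by positivity) (by positivity) h1k
    calc q * ε / (1 - k) ≤ q * ε / (q ^ 2 / 2) := h2
      _ = 2 / q * ε := by field_simp
  have hball : r + ε ≤ c₀ / (2 * LH) := by
    have h1 : r + ε ≤ (2 / q + 1) * ε := by
      calc r + ε ≤ 2 / q * ε + ε := by linarith [hr_le]
        _ = (2 / q + 1) * ε := by ring
    have hpos : (0:ℝ) < 2 / q + 1 := by positivity
    have h2 : (2 / q + 1) * ε ≤ (2 / q + 1) * ((c₀ / (2 * LH)) / (2 / q + 1)) :=
      mul_le_mul_of_nonneg_left hεε₀ hpos.le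
    have h3 : (2 / q + 1) * ((c₀ / (2 * LH)) / (2 / q + 1)) = c₀ / (2 * LH) :=
      mul_div_cancel₀ _ hpos.ne'
    linarith
  have htq : t ^ 2 * Lg ^ 2 = q ^ 2 := by
    rw [htdef, div_pow, div_mul_cancel₀ _ (pow_ne_zero 2 hLg.ne')]
  have htμ : t * μ = q ^ 2 := by
    rw [htdef, hμq]; field_simp [hLg.ne']
  clear_value μ q k t r
  have gLip : ∀ a b : H, ‖g a - g b‖ ≤ Lg * ‖a - b‖ := by
    intro a b
    have := hLipg.dist_le_mul a b
    rwa [dist_eq_norm, dist_eq_norm, Real.coe_toNNReal _ hLg.le] at this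
  have HLip : ∀ a b : H, ‖Hess a - Hess b‖ ≤ LH * ‖a - b‖ := by
    intro a b
    have := hLipH.dist_le_mul a b
    rwa [dist_eq_norm, dist_eq_norm, Real.coe_toNNReal _ hLH.le] at this
  have hcoerc : ∀ z : H, ‖z - ubar‖ ≤ c₀ / (2 * LH) → ∀ u : H,
      μ * ‖u‖ ^ 2 ≤ ⟪Hess z u, u⟫ := by
    intro z hz u
    have hop : ‖Hess z u - Hess ubar u‖ ≤ ‖Hess z - Hess ubar‖ * ‖u‖ := by
      simpa using (Hess z - Hess ubar).le_opNorm u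
    have hH : ‖Hess z - Hess ubar‖ ≤ c₀ / 2 := by
      have h1 := HLip z ubar
      have h2 : LH * ‖z - ubar‖ ≤ LH * (c₀ / (2 * LH)) :=
        mul_le_mul_of_nonneg_left hz hLH.le
      have h3 : LH * (c₀ / (2 * LH)) = c₀ / 2 := by field_simp
      linarith
    have h4 : |⟪Hess z u - Hess ubar u, u⟫| ≤ (c₀ / 2) * (‖u‖ * ‖u‖) := by
      calc |⟪Hess z u - Hess ubar u, u⟫| ≤ ‖Hess z u - Hess ubar u‖ * ‖u‖ :=
            abs_real_inner_le_norm _ _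
        _ ≤ (‖Hess z - Hess ubar‖ * ‖u‖) * ‖u‖ := by
            apply mul_le_mul_of_nonneg_right hop (norm_nonneg u)
        _ ≤ (c₀ / 2) * (‖u‖ * ‖u‖) := by
            rw [mul_assoc]
            exact mul_le_mul_of_nonneg_right hH (by positivity)
    have h5 := hstab u
    have h6 : ⟪Hess z u - Hess ubar u, u⟫ = ⟪Hess z u, u⟫ - ⟪Hess ubar u, u⟫ :=
      inner_sub_left _ _ _
    have h7 := abs_le.mp h4
    have h8 : ‖u‖ * ‖u‖ = ‖u‖ ^ 2 := (sq ‖u‖).symm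
    have h9 : μ * ‖u‖ ^ 2 ≤ (c₀ / 2) * ‖u‖ ^ 2 :=
      mul_le_mul_of_nonneg_right hμc (sq_nonneg _)
    rw [h8] at h7
    linarith [h7.1, h5, h9]
  -- the projected gradient map and the iteration map
  set Φ : H → H := fun w => ((W.orthogonalProjectionOnto (g (uhat + w))) : H) with hΦdef
  have hΦW : ∀ w, Φ w ∈ W := fun w => SetLike.coe_mem _
  have hΦorth : ∀ w, ∀ u ∈ W, ⟪g (uhat + w) - Φ w, u⟫ = 0 := fun w u hu =>
    Submodule.starProjection_inner_eq_zero _ u hu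
  have hPnorm : ∀ u : H, ‖(W.orthogonalProjectionOnto u : H)‖ ≤ ‖u‖ := by
    intro u
    have h1 : ‖W.orthogonalProjectionOnto u‖ ≤ ‖W.orthogonalProjectionOnto‖ * ‖u‖ :=
      (W.orthogonalProjectionOnto).le_opNorm u
    have h2 : ‖(W.orthogonalProjectionOnto : H →L[ℝ] W)‖ ≤ 1 := Submodule.orthogonalProjectionOnto_norm_le W
    have h3 : ‖(W.orthogonalProjectionOnto u : H)‖ = ‖W.orthogonalProjectionOnto u‖ := rfl
    have h4 : ‖(W.orthogonalProjectionOnto : H →L[ℝ] W)‖ * ‖u‖ ≤ 1 * ‖u‖ :=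
      mul_le_mul_of_nonneg_right h2 (norm_nonneg u)
    rw [h3]
    linarith
  set f : H → H := fun w => w - t • Φ w with hfdef
  set s : Set H := (W : Set H) ∩ Metric.closedBall w₀ r with hsdef
  have hs_c : IsComplete s := (hWcl.inter Metric.isClosed_closedBall).isComplete
  have hxball : ∀ w ∈ s, ‖(uhat + w) - ubar‖ ≤ c₀ / (2 * LH) := by
    intro w hw
    have he : (uhat + w) - ubar = w - v := by rw [hvdef]; abel
    rw [he]
    have h1 : ‖w - v‖ ≤ ‖w - w₀‖ + ‖w₀ - v‖ := norm_sub_le_norm_sub_add_norm_sub w w₀ v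
    have h2 : ‖w - w₀‖ ≤ r := by
      have := hw.2
      rwa [Metric.mem_closedBall, dist_eq_norm] at this
    have h3 : ‖w₀ - v‖ = dd := by rw [hdddef, norm_sub_rev]
    linarith
  have hmono : ∀ w₁ ∈ s, ∀ w₂ ∈ s,
      μ * ‖w₁ - w₂‖ ^ 2 ≤ ⟪g (uhat + w₁) - g (uhat + w₂), w₁ - w₂⟫ := by
    intro w₁ h₁ w₂ h₂
    have hx : (uhat + w₁) - (uhat + w₂) = w₁ - w₂ := by abel
    have hseg : ∀ τ ∈ Set.Icc (0:ℝ) 1,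
        μ * ‖(uhat + w₁) - (uhat + w₂)‖ ^ 2 ≤
          ⟪Hess ((uhat + w₂) + τ • ((uhat + w₁) - (uhat + w₂)))
            ((uhat + w₁) - (uhat + w₂)), (uhat + w₁) - (uhat + w₂)⟫ := by
      intro τ hτ
      apply hcoerc
      have hz : ((uhat + w₂) + τ • ((uhat + w₁) - (uhat + w₂))) - ubar =
          (1 - τ) • ((uhat + w₂) - ubar) + τ • ((uhat + w₁) - ubar) := by module
      rw [hz]
      have b1 := hxball _ h₁
      have b2 := hxball _ h₂
      calc ‖(1 - τ) • ((uhat + w₂) - ubar) + τ • ((uhat + w₁) - ubar)‖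
          ≤ ‖(1 - τ) • ((uhat + w₂) - ubar)‖ + ‖τ • ((uhat + w₁) - ubar)‖ := norm_add_le _ _
        _ = (1 - τ) * ‖(uhat + w₂) - ubar‖ + τ * ‖(uhat + w₁) - ubar‖ := by
            rw [norm_smul, norm_smul, Real.norm_of_nonneg (by linarith [hτ.2]),
              Real.norm_of_nonneg hτ.1]
        _ ≤ (1 - τ) * (c₀ / (2 * LH)) + τ * (c₀ / (2 * LH)) := by
            have ht1 : (0:ℝ) ≤ 1 - τ := by linarith [hτ.2]
            exact add_le_add (mul_le_mul_of_nonneg_left b2 ht1)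
              (mul_le_mul_of_nonneg_left b1 hτ.1)
        _ = c₀ / (2 * LH) := by ring
    have := mono_aux g Hess hgH μ (uhat + w₁) (uhat + w₂) hseg
    rwa [hx] at this
  have hΦmono : ∀ w₁ ∈ s, ∀ w₂ ∈ s,
      μ * ‖w₁ - w₂‖ ^ 2 ≤ ⟪Φ w₁ - Φ w₂, w₁ - w₂⟫ := by
    intro w₁ h₁ w₂ h₂
    have hw12 : w₁ - w₂ ∈ W := sub_mem h₁.1 h₂.1
    have e1 := hΦorth w₁ _ hw12
    have e2 := hΦorth w₂ _ hw12
    rw [inner_sub_left] at e1 e2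
    have hkey : ⟪Φ w₁ - Φ w₂, w₁ - w₂⟫ = ⟪g (uhat + w₁) - g (uhat + w₂), w₁ - w₂⟫ := by
      rw [inner_sub_left, inner_sub_left]
      linarith
    rw [hkey]
    exact hmono w₁ h₁ w₂ h₂
  have hΦlip : ∀ w₁ w₂ : H, ‖Φ w₁ - Φ w₂‖ ≤ Lg * ‖w₁ - w₂‖ := by
    intro w₁ w₂
    have he : Φ w₁ - Φ w₂ = ((W.orthogonalProjectionOnto (g (uhat + w₁) - g (uhat + w₂))) : H) := by
      rw [hΦdef]
      simp [map_sub]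
    rw [he]
    have h1 := hPnorm (g (uhat + w₁) - g (uhat + w₂))
    have h2 := gLip (uhat + w₁) (uhat + w₂)
    have h3 : (uhat + w₁) - (uhat + w₂) = w₁ - w₂ := by abel
    rw [h3] at h2
    linarith
  have hflip : ∀ w₁ ∈ s, ∀ w₂ ∈ s, ‖f w₁ - f w₂‖ ≤ k * ‖w₁ - w₂‖ := by
    intro w₁ h₁ w₂ h₂
    have he : f w₁ - f w₂ = (w₁ - w₂) - t • (Φ w₁ - Φ w₂) := by
      rw [hfdef]; simp [smul_sub]; abel
    have hsq : ‖f w₁ - f w₂‖ ^ 2 ≤ (k * ‖w₁ - w₂‖) ^ 2 := by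
      rw [he, norm_sub_sq_real]
      have hin : ⟪w₁ - w₂, t • (Φ w₁ - Φ w₂)⟫ = t * ⟪Φ w₁ - Φ w₂, w₁ - w₂⟫ := by
        rw [real_inner_smul_right, real_inner_comm]
      have hns : ‖t • (Φ w₁ - Φ w₂)‖ ^ 2 = t ^ 2 * ‖Φ w₁ - Φ w₂‖ ^ 2 := by
        rw [norm_smul, Real.norm_of_nonneg ht0.le, mul_pow]
      rw [hin, hns]
      have m1 := hΦmono w₁ h₁ w₂ h₂
      have m2 := hΦlip w₁ w₂
      have m3 : ‖Φ w₁ - Φ w₂‖ ^ 2 ≤ (Lg * ‖w₁ - w₂‖) ^ 2 :=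
        pow_le_pow_left₀ (norm_nonneg _) m2 2
      have hksq' : (k * ‖w₁ - w₂‖) ^ 2 = (1 - q ^ 2) * ‖w₁ - w₂‖ ^ 2 := by
        rw [mul_pow, hksq]
      rw [hksq']
      have p1 : t ^ 2 * ‖Φ w₁ - Φ w₂‖ ^ 2 ≤ t ^ 2 * (Lg * ‖w₁ - w₂‖) ^ 2 :=
        mul_le_mul_of_nonneg_left m3 (sq_nonneg t)
      have p2 : t * (μ * ‖w₁ - w₂‖ ^ 2) ≤ t * ⟪Φ w₁ - Φ w₂, w₁ - w₂⟫ :=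
        mul_le_mul_of_nonneg_left m1 ht0.le
      have e1 : t ^ 2 * (Lg * ‖w₁ - w₂‖) ^ 2 = q ^ 2 * ‖w₁ - w₂‖ ^ 2 := by
        rw [mul_pow, ← mul_assoc, htq]
      have e2 : t * (μ * ‖w₁ - w₂‖ ^ 2) = q ^ 2 * ‖w₁ - w₂‖ ^ 2 := by
        rw [← mul_assoc, htμ]
      rw [e1] at p1
      rw [e2] at p2
      ring_nf
      ring_nf at p1 p2
      linarith
    have h1 : 0 ≤ k * ‖w₁ - w₂‖ := by positivity
    have h2 := Real.sqrt_le_sqrt hsq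
    rwa [Real.sqrt_sq (norm_nonneg _), Real.sqrt_sq h1] at h2
  have hw₀s : w₀ ∈ s := ⟨hw₀W, by rw [Metric.mem_closedBall, dist_self]; exact hr0.le⟩
  have hfw₀ : ‖f w₀ - w₀‖ ≤ q * ε := by
    have he : f w₀ - w₀ = -(t • Φ w₀) := by rw [hfdef]; simp
    rw [he, norm_neg, norm_smul, Real.norm_of_nonneg ht0.le]
    have h1 := hPnorm (g (uhat + w₀))
    have h2 : ‖g (uhat + w₀)‖ = ‖g (uhat + w₀) - g ubar‖ := by rw [hgubar, sub_zero]
    have h3 := gLip (uhat + w₀) ubar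
    have h4 : (uhat + w₀) - ubar = w₀ - v := by rw [hvdef]; abel
    rw [h4] at h3
    have h5 : ‖w₀ - v‖ = dd := by rw [hdddef, norm_sub_rev]
    rw [h5] at h3
    have h6 : ‖Φ w₀‖ ≤ Lg * dd := by
      rw [hΦdef]
      calc ‖((W.orthogonalProjectionOnto (g (uhat + w₀))) : H)‖ ≤ ‖g (uhat + w₀)‖ := h1
        _ = ‖g (uhat + w₀) - g ubar‖ := h2
        _ ≤ Lg * dd := h3
    calc t * ‖Φ w₀‖ ≤ t * (Lg * dd) := mul_le_mul_of_nonneg_left h6 ht0.le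
      _ = q * dd := by rw [← htLg]; ring
      _ ≤ q * ε := mul_le_mul_of_nonneg_left hddε hq0.le
  have hmaps : Set.MapsTo f s s := by
    intro w hw
    constructor
    · exact sub_mem hw.1 (W.smul_mem _ (hΦW w))
    · rw [Metric.mem_closedBall, dist_eq_norm]
      have h1 : ‖f w - w₀‖ ≤ ‖f w - f w₀‖ + ‖f w₀ - w₀‖ :=
        norm_sub_le_norm_sub_add_norm_sub _ _ _
      have h2 := hflip w hw w₀ hw₀s
      have h3 : ‖w - w₀‖ ≤ r := by
        have := hw.2; rwa [Metric.mem_closedBall, dist_eq_norm] at this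
      have h4 : k * ‖w - w₀‖ ≤ k * r := mul_le_mul_of_nonneg_left h3 hk0
      have h5 : q * ε = (1 - k) * r := hqεr
      linarith
  have hcontr : ContractingWith k.toNNReal (hmaps.restrict f s s) := by
    constructor
    · rw [← NNReal.coe_lt_coe, Real.coe_toNNReal _ hk0]
      exact hk1
    · apply LipschitzOnWith.mapsToRestrict
      apply LipschitzOnWith.of_dist_le'
      intro x hx y hy
      rw [dist_eq_norm, dist_eq_norm]
      exact hflip x hx y hy
  obtain ⟨y, hys, hfy, -, -⟩ :=
    hcontr.exists_fixedPoint' hs_c hmaps hw₀s (edist_ne_top _ _)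
  have hΦy : Φ y = 0 := by
    have : y - t • Φ y = y := hfy
    have h0 : t • Φ y = 0 := by
      have := sub_eq_self.mp this
      exact this
    rcases smul_eq_zero.mp h0 with h | h
    · exact absurd h ht0.ne'
    · exact h
  refine ⟨uhat + y, ?_, ?_, ?_⟩
  · rw [add_sub_cancel_left]
    exact hys.1
  · intro u hu
    have := hΦorth y u hu
    rwa [hΦy, sub_zero] at this
  · have he : ubar - (uhat + y) = v - y := by rw [hvdef]; abel
    rw [he]
    have h1 : ‖v - y‖ ≤ ‖v - w₀‖ + ‖w₀ - y‖ := norm_sub_le_norm_sub_add_norm_sub _ _ _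
    have h2 : ‖w₀ - y‖ ≤ r := by
      have := hys.2
      rw [Metric.mem_closedBall, dist_eq_norm] at this
      rwa [norm_sub_rev]
    have hCq : (0:ℝ) < 2 / q := by positivity
    have hr2 : r ≤ 2 / q * ε := hr_le
    have : ‖v - y‖ ≤ D + 2 / q * ε := by
      have := hdD
      linarith
    calc ‖v - y‖ ≤ D + 2 / q * ε := this
      _ ≤ (1 + 2 / q) * D + (1 + 2 / q) * ε := by
          have e : (1 + 2 / q) * D + (1 + 2 / q) * ε = D + 2 / q * ε + (2 / q * D + ε) := by ring
          have n1 : 0 ≤ 2 / q * D := by positivity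
          linarith
end
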